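/- arXiv:0812.4914 — 6 statements merged into one kernel-verified Lean document; each statement's English description precedes it below -/
import Mathlib

section
/- (Proposition 1) Let w ∈ M and p ≥ 1, and suppose there exist a_1, …, a_p ∈ K such that D^p w = a_1 • D^{p−1} w + a_2 • D^{p−2} w + ⋯ + a_p • w. Then there exist b_1, …, b_p ∈ K such that D^p w + D^{p−1}(b_1 • w) + D^{p−2}(b_2 • w) + ⋯ + b_p • w = 0. -/
section Aux

variable {K : Type*} [Field K] {M : Type*} [AddCommGroup M] [Module K M]
    (d : K → K) (D : M → M)

lemma auxIterAdd (hD_add : ∀ u v : M, D (u + v) = D u + D v) :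
    ∀ (m : ℕ) (u v : M), D^[m] (u + v) = D^[m] u + D^[m] v := by
  intro m
  induction m with
  | zero => intro u v; simp
  | succ m ih =>
      intro u v
      simp only [Function.iterate_succ_apply, hD_add, ih]

lemma auxA (hD_add : ∀ u v : M, D (u + v) = D u + D v)
    (hD_smul : ∀ (a : K) (w : M), D (a • w) = d a • w + a • D w) :
    ∀ (m : ℕ) (b : K) (w : M), ∃ e : ℕ → K,
      D^[m] (b • w) = ∑ i ∈ Finset.range (m + 1), e i • D^[i] w ∧ e m = b := by
  intro m
  induction m with
  | zero =>
      intro b w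
      exact ⟨fun _ => b, by simp, rfl⟩
  | succ m ih =>
      intro b w
      obtain ⟨f, hf, _⟩ := ih (d b) w
      obtain ⟨g, hg, hgm⟩ := ih b (D w)
      refine ⟨fun j => (if j ≤ m then f j else 0) + (if j = 0 then 0 else g (j - 1)),
        ?_, by simp [hgm]⟩
      have h1 : D^[m + 1] (b • w) = D^[m] (d b • w) + D^[m] (b • D w) := by
        rw [Function.iterate_succ_apply, hD_smul, auxIterAdd D hD_add]
      rw [h1, hf, hg]
      have h2 : ∑ i ∈ Finset.range (m + 1), g i • D^[i] (D w)
          = ∑ i ∈ Finset.range (m + 1), g i • D^[i + 1] w := by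
        simp [Function.iterate_succ_apply]
      rw [h2]
      have h3 : ∑ j ∈ Finset.range (m + 1 + 1), (if j ≤ m then f j else 0) • D^[j] w
          = ∑ i ∈ Finset.range (m + 1), f i • D^[i] w := by
        rw [Finset.sum_range_succ, if_neg (by omega : ¬ (m + 1 ≤ m)), zero_smul, add_zero]
        exact Finset.sum_congr rfl fun j hj => by
          rw [if_pos (by simpa [Nat.lt_succ_iff] using Finset.mem_range.mp hj)]
      have h4 : ∑ j ∈ Finset.range (m + 1 + 1), (if j = 0 then (0 : K) else g (j - 1)) • D^[j] w
          = ∑ i ∈ Finset.range (m + 1), g i • D^[i + 1] w := by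
        rw [Finset.sum_range_succ']
        simp
      beta_reduce
      rw [← h3, ← h4, ← Finset.sum_add_distrib]
      exact Finset.sum_congr rfl fun j _ => (add_smul _ _ _).symm

lemma auxB (hD_add : ∀ u v : M, D (u + v) = D u + D v)
    (hD_smul : ∀ (a : K) (w : M), D (a • w) = d a • w + a • D w) :
    ∀ (n : ℕ) (c : ℕ → K) (w : M), ∃ b : ℕ → K,
      ∑ k ∈ Finset.range n, D^[k] (b k • w) = ∑ k ∈ Finset.range n, c k • D^[k] w := by
  intro n
  induction n with
  | zero => intro c w; exact ⟨fun _ => 0, by simp⟩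
  | succ n ih =>
      intro c w
      obtain ⟨e, he, hen⟩ := auxA d D hD_add hD_smul n (c n) w
      obtain ⟨b, hb⟩ := ih (fun k => c k - e k) w
      refine ⟨fun k => if k = n then c n else b k, ?_⟩
      rw [Finset.sum_range_succ, Finset.sum_range_succ]
      have hrest : ∑ k ∈ Finset.range n, D^[k] ((if k = n then c n else b k) • w)
          = ∑ k ∈ Finset.range n, (c k - e k) • D^[k] w := by
        rw [← hb]
        exact Finset.sum_congr rfl fun k hk => by
          rw [if_neg (Nat.ne_of_lt (Finset.mem_range.mp hk))]
      have hn : (fun k => if k = n then c n else b k) n = c n := by simp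
      rw [hrest, hn, he, Finset.sum_range_succ, hen]
      rw [← add_assoc]
      congr 1
      rw [← Finset.sum_add_distrib]
      exact Finset.sum_congr rfl fun k _ => by rw [← add_smul]; ring_nf

end Aux

/-- Proposition 1: if `D^[p] w` is a `K`-linear combination of the lower iterates
`D^[p-k] w`, `k = 1, …, p`, then there exist coefficients `b k ∈ K` such that
`D^[p] w + ∑_{k=1}^{p} D^[p-k] (b k • w) = 0`. -/
theorem prop1_differential_relation
    (K : Type*) [Field K] (M : Type*) [AddCommGroup M] [Module K M]
    (d : K → K)
    (hd_add : ∀ a b : K, d (a + b) = d a + d b)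
    (hd_mul : ∀ a b : K, d (a * b) = d a * b + a * d b)
    (D : M → M)
    (hD_add : ∀ u v : M, D (u + v) = D u + D v)
    (hD_smul : ∀ (a : K) (w : M), D (a • w) = d a • w + a • D w)
    (w : M) (p : ℕ) (hp : 1 ≤ p)
    (a : ℕ → K)
    (ha : D^[p] w = ∑ k ∈ Finset.Icc 1 p, a k • D^[p - k] w) :
    ∃ b : ℕ → K,
      D^[p] w + ∑ k ∈ Finset.Icc 1 p, D^[p - k] (b k • w) = 0 := by
  -- reindexing lemma: Icc 1 p sums of F (p - k) become range p sums
  have hIcc : ∀ F : ℕ → M, ∑ k ∈ Finset.Icc 1 p, F k = ∑ j ∈ Finset.range p, F (p - j) := by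
    intro F
    rw [← Finset.Ico_add_one_right_eq_Icc, Finset.sum_Ico_eq_sum_range]
    simp only [Nat.succ_sub_one, Nat.add_sub_cancel]
    have := Finset.sum_range_reflect (fun j => F (p - j)) p
    rw [← this]
    exact Finset.sum_congr rfl fun i hi => by
      have hi' := Finset.mem_range.mp hi
      show F (1 + i) = F (p - (p - 1 - i))
      congr 1
      omega
  obtain ⟨b, hb⟩ := auxB d D hD_add hD_smul p (fun j => -(a (p - j))) w
  refine ⟨fun k => b (p - k), ?_⟩
  have h1 : ∑ k ∈ Finset.Icc 1 p, D^[p - k] (b (p - k) • w)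
      = ∑ j ∈ Finset.range p, D^[j] (b j • w) := by
    rw [hIcc fun k => D^[p - k] (b (p - k) • w)]
    exact Finset.sum_congr rfl fun j hj => by
      have := Finset.mem_range.mp hj
      rw [show p - (p - j) = j by omega]
  have h2 : D^[p] w = ∑ j ∈ Finset.range p, a (p - j) • D^[j] w := by
    rw [ha, hIcc fun k => a k • D^[p - k] w]
    exact Finset.sum_congr rfl fun j hj => by
      have := Finset.mem_range.mp hj
      rw [show p - (p - j) = j by omega]
  rw [h1, hb, h2, ← Finset.sum_add_distrib]
  simp
end

section
/- Let L be a Lie algebra over ℚ, let ∂ : L → L be a derivation of L (additive with ∂[x, y] = [∂x, y] + [x, ∂y]), and let (X_n)_{n ∈ ℕ} be a sequence in L satisfying ∂X_n = X_{n+1} for all n and the two-step nilpotency condition [[X_m, X_n], X_k] = 0 for all m, n, k. Define the additive operator D : L → L by D(w) = −∂w − [X_0, w]. Then for every m ≥ 1 the identity Σ_{k=0}^{m} binom(m, k) D^{m−k} X_{m+k−1} = 0 holds in L. -/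
/-!
Put `E w = ∂ w + ⁅X 0, w⁆`, so that `D = -E`. Since `ad (X 0)` kills every bracket `⁅X b, X c⁆`,
`E` acts on the elements `X c` and `⁅X b, X c⁆` like a sum of two commuting shifts, one raising
`c` and one raising `b` (with `X c ↦ ⁅X 0, X c⁆` as the first step of the latter). Hence
`E^j (X n)` is a binomial combination of such elements, and in the theorem all of them have the
same total index `2m - 1`. The alternating binomial sum then collapses, as
`(1 - (1 + t))^m = (-t)^m`, to the single term `⁅X (m-1), X (m-1)⁆ = 0`.
-/

open Finset

open Polynomial in
theorem sum_choose_mul_neg_one_pow_mul_choose (m i : ℕ) :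
    ∑ k ∈ range (m + 1), (m.choose k : ℤ) * (-1) ^ (m - k) * ((m - k).choose i : ℤ) =
      if i = m then (-1) ^ m else 0 := by
  have hpoly : ∑ k ∈ range (m + 1), ((m.choose k : ℤ) * (-1) ^ (m - k)) • (X + 1 : ℤ[X]) ^ (m - k) =
      (-1 : ℤ) ^ m • X ^ m := by
    rw [show (-1 : ℤ) ^ m • (X : ℤ[X]) ^ m = (1 + -(X + 1)) ^ m by
      rw [zsmul_eq_mul]; push_cast; ring, add_pow]
    refine sum_congr rfl fun k _ => ?_
    rw [zsmul_eq_mul, neg_pow (X + 1 : ℤ[X])]; push_cast; ring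
  have := congrArg (coeff · i) hpoly
  simp only [finsetSum_coeff, coeff_smul, coeff_X_add_one_pow, coeff_X_pow, smul_eq_mul] at this
  simpa [eq_comm] using this

theorem sum_choose_smul_neg_one_pow_smul_sum_choose_smul {M : Type*} [AddCommGroup M]
    (f : ℕ → M) (m : ℕ) :
    ∑ k ∈ range (m + 1), m.choose k • (-1 : ℤ) ^ (m - k) •
      ∑ i ∈ range (m - k + 1), (m - k).choose i • f i = (-1 : ℤ) ^ m • f m := by
  have extend : ∀ k ∈ range (m + 1), ∑ i ∈ range (m - k + 1), (m - k).choose i • f i =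
      ∑ i ∈ range (m + 1), (m - k).choose i • f i := fun k _ =>
    sum_subset (range_subset_range.2 (by omega)) fun i _ hi => by
      rw [Nat.choose_eq_zero_of_lt (by simpa using hi), zero_smul]
  calc _ = ∑ k ∈ range (m + 1), ∑ i ∈ range (m + 1),
        ((m.choose k : ℤ) * (-1) ^ (m - k) * ((m - k).choose i : ℤ)) • f i :=
        sum_congr rfl fun k hk => by
          simp only [extend k hk, smul_sum, mul_smul, natCast_zsmul]
    _ = ∑ i ∈ range (m + 1), (∑ k ∈ range (m + 1),
        (m.choose k : ℤ) * (-1) ^ (m - k) * ((m - k).choose i : ℤ)) • f i := by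
        simp only [sum_smul]; exact sum_comm
    _ = (-1 : ℤ) ^ m • f m := by
        simp [sum_choose_mul_neg_one_pow_mul_choose, ite_smul]

theorem AddMonoidHom.iterate_apply_eq_sum_choose_smul {M : Type*} [AddCommMonoid M] (E : M →+ M)
    (U : ℕ → ℕ → M) (hU : ∀ c b, E (U c b) = U (c + 1) b + U c (b + 1)) (j c b : ℕ) :
    E^[j] (U c b) = ∑ i ∈ Finset.range (j + 1), j.choose i • U (c + (j - i)) (b + i) := by
  induction j generalizing c b with
  | zero => simp
  | succ j ih =>
    rw [Function.iterate_succ_apply, hU, iterate_map_add, ih, ih,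
      Finset.sum_choose_succ_nsmul (fun i k => U (c + k) (b + i))]
    congr 1
    · refine sum_congr rfl fun i hi => ?_
      rw [show c + 1 + (j - i) = c + (j + 1 - i) by simp at hi; omega]
    · simp only [add_assoc, add_comm 1]

theorem AddMonoidHom.iterate_neg_apply {M : Type*} [AddCommGroup M] (E : M →+ M) (j : ℕ) (x : M) :
    (fun y => -E y)^[j] x = (-1 : ℤ) ^ j • E^[j] x := by
  induction j with
  | zero => simp
  | succ j ih =>
    rw [Function.iterate_succ_apply', ih, Function.iterate_succ_apply', map_zsmul, pow_succ',
      mul_smul, neg_one_zsmul]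

section

variable {L : Type*} [LieRing L]

def bracketTerm (X : ℕ → L) : ℕ → ℕ → L
  | c, 0 => X c
  | c, b + 1 => ⁅X b, X c⁆

theorem bracketTerm_pascal {del : L → L} (hdel_br : ∀ x y : L, del ⁅x, y⁆ = ⁅del x, y⁆ + ⁅x, del y⁆)
    {X : ℕ → L} (hX : ∀ n : ℕ, del (X n) = X (n + 1)) (hnil : ∀ m n k : ℕ, ⁅⁅X m, X n⁆, X k⁆ = 0)
    (c b : ℕ) :
    del (bracketTerm X c b) + ⁅X 0, bracketTerm X c b⁆ =
      bracketTerm X (c + 1) b + bracketTerm X c (b + 1) := by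
  cases b with
  | zero => simp [bracketTerm, hX]
  | succ b =>
    simp only [bracketTerm, hdel_br, hX, ← lie_skew (X 0), hnil, neg_zero, add_zero]
    exact add_comm _ _

theorem iterate_neg_sub_lie_apply {del : L → L} (hdel_add : ∀ x y : L, del (x + y) = del x + del y)
    (hdel_br : ∀ x y : L, del ⁅x, y⁆ = ⁅del x, y⁆ + ⁅x, del y⁆)
    {X : ℕ → L} (hX : ∀ n : ℕ, del (X n) = X (n + 1)) (hnil : ∀ m n k : ℕ, ⁅⁅X m, X n⁆, X k⁆ = 0)
    (j n : ℕ) :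
    (fun w => -del w - ⁅X 0, w⁆)^[j] (X n) =
      (-1 : ℤ) ^ j • ∑ i ∈ range (j + 1), j.choose i • bracketTerm X (n + (j - i)) i := by
  let E : L →+ L := AddMonoidHom.mk' (fun w => del w + ⁅X 0, w⁆) fun x y => by
    simp only [hdel_add, lie_add]; abel
  have hD : (fun w => -del w - ⁅X 0, w⁆) = fun w => -E w := funext fun w => (neg_add' _ _).symm
  rw [hD, E.iterate_neg_apply]
  simpa [bracketTerm] using congrArg _ (E.iterate_apply_eq_sum_choose_smul (bracketTerm X)
    (bracketTerm_pascal hdel_br hX hnil) j n 0)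

end

theorem nilpotent_sequence_identity_general
    (L : Type*) [LieRing L]
    (del : L → L)
    (hdel_add : ∀ x y : L, del (x + y) = del x + del y)
    (hdel_br : ∀ x y : L, del ⁅x, y⁆ = ⁅del x, y⁆ + ⁅x, del y⁆)
    (X : ℕ → L) (hX : ∀ n : ℕ, del (X n) = X (n + 1))
    (hnil : ∀ m n k : ℕ, ⁅⁅X m, X n⁆, X k⁆ = 0)
    (m : ℕ) (hm : 1 ≤ m) :
    ∑ k ∈ Finset.range (m + 1),
      (m.choose k) • (fun w => -del w - ⁅X 0, w⁆)^[m - k] (X (m + k - 1)) = 0 := by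
  obtain ⟨n, rfl⟩ : ∃ n, m = n + 1 := ⟨m - 1, by omega⟩
  calc _ = ∑ k ∈ range (n + 2), (n + 1).choose k • (-1 : ℤ) ^ (n + 1 - k) •
        ∑ i ∈ range (n + 1 - k + 1), (n + 1 - k).choose i • bracketTerm X (2 * n + 1 - i) i := by
        refine sum_congr rfl fun k hk => ?_
        rw [iterate_neg_sub_lie_apply hdel_add hdel_br hX hnil]
        congr 2
        refine sum_congr rfl fun i hi => ?_
        rw [show n + 1 + k - 1 + (n + 1 - k - i) = 2 * n + 1 - i by simp at hk hi; omega]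
    _ = (-1 : ℤ) ^ (n + 1) • bracketTerm X (2 * n + 1 - (n + 1)) (n + 1) :=
        sum_choose_smul_neg_one_pow_smul_sum_choose_smul _ _
    _ = 0 := by rw [show 2 * n + 1 - (n + 1) = n by omega, bracketTerm, lie_self, smul_zero]

/-- In a Lie algebra `L` over `ℚ` with a derivation `∂`, a sequence `X n` with
`∂ (X n) = X (n+1)` and vanishing double brackets, the operator
`D w = -∂ w - ⁅X 0, w⁆` satisfies the identities
`∑_{k=0}^{m} C(m,k) • D^[m-k] (X (m+k-1)) = 0` for all `m ≥ 1`. -/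
theorem nilpotent_sequence_identity
    (L : Type*) [LieRing L] [LieAlgebra ℚ L]
    (del : L → L)
    (hdel_add : ∀ x y : L, del (x + y) = del x + del y)
    (hdel_br : ∀ x y : L, del ⁅x, y⁆ = ⁅del x, y⁆ + ⁅x, del y⁆)
    (X : ℕ → L) (hX : ∀ n : ℕ, del (X n) = X (n + 1))
    (hnil : ∀ m n k : ℕ, ⁅⁅X m, X n⁆, X k⁆ = 0)
    (m : ℕ) (hm : 1 ≤ m) :
    ∑ k ∈ Finset.range (m + 1),
      (m.choose k) • (fun w => -del w - ⁅X 0, w⁆)^[m - k] (X (m + k - 1)) = 0 :=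
  nilpotent_sequence_identity_general L del hdel_add hdel_br X hX hnil m hm
end

section
/- Let U ⊆ ℝ^n be a nonempty open connected set and let M : U → Mat_{N×n'}(ℝ) be a matrix-valued map each of whose entries is real-analytic on U. Let m be the maximal value of rank M(x) over x ∈ U. Then the set U' = {x ∈ U : rank M(x) = m} is open and dense in U. -/
/-!
`m ≤ rank A` holds exactly when some `m × m` minor of `A` is nonzero. Each minor of `M` is
real-analytic on `U`, so the set where it does not vanish is open, and by the identity theorem on
the connected set `U` it is dense in `U` unless the minor vanishes identically. Since `m` is the
maximal rank, the maximal-rank set is the union of these sets over all `m × m` minors, and the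
minor that is nonzero at a point of rank `m` gives density.
-/

open Set Submodule Topology

theorem exists_linearIndependent_comp_of_le_finrank_span {K V ι : Type*} [Field K]
    [AddCommGroup V] [Module K V] [Finite ι] (v : ι → V) {k : ℕ}
    (hk : k ≤ Module.finrank K (span K (range v))) :
    ∃ r : Fin k → ι, LinearIndependent K (v ∘ r) := by
  obtain ⟨κ, a, ha, hspan, hli⟩ := exists_linearIndependent' K v
  have : Finite κ := Finite.of_injective a ha
  cases nonempty_fintype κ
  rw [← hspan, finrank_span_eq_card hli, ← Fintype.card_fin k] at hk
  obtain ⟨e⟩ := Function.Embedding.nonempty_of_card_le hk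
  exact ⟨a ∘ e, hli.comp e e.injective⟩

namespace Matrix

variable {K m n : Type*} [Field K] [Fintype m] [Fintype n]

theorem exists_linearIndependent_rows_of_le_rank (A : Matrix m n K) {k : ℕ} (hk : k ≤ A.rank) :
    ∃ r : Fin k → m, LinearIndependent K (A.submatrix r id).row := by
  rw [rank_eq_finrank_span_row] at hk
  exact exists_linearIndependent_comp_of_le_finrank_span A.row hk

theorem le_rank_iff_exists_det_submatrix_ne_zero (A : Matrix m n K) {k : ℕ} :
    k ≤ A.rank ↔ ∃ (r : Fin k → m) (c : Fin k → n), (A.submatrix r c).det ≠ 0 := by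
  constructor
  · intro hk
    obtain ⟨r, hr⟩ := A.exists_linearIndependent_rows_of_le_rank hk
    have hrank : k ≤ (A.submatrix r id)ᵀ.rank := by
      rw [rank_transpose, hr.rank_matrix, Fintype.card_fin]
    obtain ⟨c, hc⟩ := (A.submatrix r id)ᵀ.exists_linearIndependent_rows_of_le_rank hrank
    have hcols : LinearIndependent K (A.submatrix r c).col := by
      simpa [← row_transpose] using hc
    exact ⟨r, c,
      ((isUnit_iff_isUnit_det _).1 (linearIndependent_cols_iff_isUnit.1 hcols)).ne_zero⟩
  · rintro ⟨r, c, hdet⟩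
    calc k = (A.submatrix r c).rank := by rw [rank_of_det_ne_zero hdet, Fintype.card_fin]
      _ ≤ A.rank := rank_submatrix_le A r c

end Matrix

theorem AnalyticAt.matrix_det {𝕜 E ι : Type*} [NontriviallyNormedField 𝕜]
    [NormedAddCommGroup E] [NormedSpace 𝕜 E] [Fintype ι] [DecidableEq ι]
    {A : E → Matrix ι ι 𝕜} {x : E} (hA : ∀ i j, AnalyticAt 𝕜 (fun y => A y i j) x) :
    AnalyticAt 𝕜 (fun y => (A y).det) x := by
  simp only [Matrix.det_apply']
  exact Finset.analyticAt_fun_sum _ fun σ _ =>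
    analyticAt_const.mul (Finset.analyticAt_fun_prod _ fun i _ => hA (σ i) i)

theorem AnalyticOnNhd.subset_closure_setOf_ne_zero {𝕜 E F : Type*} [NontriviallyNormedField 𝕜]
    [NormedAddCommGroup E] [NormedSpace 𝕜 E] [NormedAddCommGroup F] [NormedSpace 𝕜 F]
    {f : E → F} {U : Set E} (hf : AnalyticOnNhd 𝕜 f U) (hUo : IsOpen U) (hU : IsPreconnected U)
    {x₀ : E} (hx₀ : x₀ ∈ U) (hfx₀ : f x₀ ≠ 0) :
    U ⊆ closure {x | x ∈ U ∧ f x ≠ 0} := by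
  intro x hx
  by_contra hcl
  have hzero : f =ᶠ[𝓝 x] 0 := by
    rw [mem_closure_iff_frequently, Filter.not_frequently] at hcl
    filter_upwards [hcl, hUo.mem_nhds hx] with y hy hyU
    exact not_not.1 fun hfy => hy ⟨hyU, hfy⟩
  exact hfx₀ (hf.eqOn_zero_of_preconnected_of_eventuallyEq_zero hU hx hzero hx₀)

/-- For a matrix-valued map `M` with real-analytic entries on a nonempty open
connected set `U ⊆ ℝ^n`, the set of points where `rank M(x)` attains its
maximal value `m` over `U` is open and dense in `U`. -/
theorem maximal_rank_set_open_dense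
    (n N n' : ℕ) (U : Set (Fin n → ℝ))
    (hUopen : IsOpen U) (hUconn : IsConnected U)
    (M : (Fin n → ℝ) → Matrix (Fin N) (Fin n') ℝ)
    (hM : ∀ (i : Fin N) (j : Fin n'), ∀ x ∈ U, AnalyticAt ℝ (fun y => M y i j) x)
    (m : ℕ)
    (hle : ∀ x ∈ U, (M x).rank ≤ m)
    (hattained : ∃ x ∈ U, (M x).rank = m) :
    IsOpen {x | x ∈ U ∧ (M x).rank = m} ∧
      U ⊆ closure {x | x ∈ U ∧ (M x).rank = m} := by
  set minor : (Fin m → Fin N) → (Fin m → Fin n') → (Fin n → ℝ) → ℝ :=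
    fun r c x => ((M x).submatrix r c).det
  have hminor (r c) : AnalyticOnNhd ℝ (minor r c) U := fun x hx =>
    AnalyticAt.matrix_det fun i j => hM (r i) (c j) x hx
  have hS :
      {x | x ∈ U ∧ (M x).rank = m} = ⋃ (r) (c), {x | x ∈ U ∧ minor r c x ≠ 0} := by
    ext x
    simp only [mem_ofPred_eq, mem_iUnion, minor]
    constructor
    · rintro ⟨hx, hrank⟩
      obtain ⟨r, c, hrc⟩ := (M x).le_rank_iff_exists_det_submatrix_ne_zero.1 hrank.ge
      exact ⟨r, c, hx, hrc⟩
    · rintro ⟨r, c, hx, hrc⟩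
      exact ⟨hx, (hle x hx).antisymm
        ((M x).le_rank_iff_exists_det_submatrix_ne_zero.2 ⟨r, c, hrc⟩)⟩
  refine ⟨?_, ?_⟩
  · rw [hS]
    exact isOpen_iUnion fun r => isOpen_iUnion fun c =>
      (hminor r c).continuousOn.isOpen_inter_preimage hUopen isOpen_compl_singleton
  · obtain ⟨x₀, hx₀U, hx₀⟩ := hattained
    obtain ⟨r, c, hrc⟩ := (M x₀).le_rank_iff_exists_det_submatrix_ne_zero.1 hx₀.ge
    rw [hS]
    exact ((hminor r c).subset_closure_setOf_ne_zero hUopen hUconn.isPreconnected hx₀U hrc).trans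
      (closure_mono (subset_iUnion₂ (s := fun r c => {x | x ∈ U ∧ minor r c x ≠ 0}) r c))
end

section
/- Let V, Z_1, …, Z_l : ℝ^n → ℝ^n be smooth vector fields and suppose there exist smooth functions U^γ_{αβ}, V^β_α : ℝ^n → ℝ (α, β, γ ∈ {1,…,l}) such that pointwise [Z_α, Z_β](x) = Σ_γ U^γ_{αβ}(x) Z_γ(x) and [Z_α, V](x) = Σ_β V^β_α(x) Z_β(x). Let x : ℝ → ℝ^n and λ : ℝ → ℝ^l be smooth curves satisfying ẋ(t) = V(x(t)) + Σ_α λ^α(t) Z_α(x(t)) for all t, and let ε : ℝ → ℝ^l be smooth. Define δx(t) = Σ_α ε^α(t) Z_α(x(t)) and δλ^α(t) = ε̇^α(t) − Σ_β (V^α_β(x(t)) + Σ_γ U^α_{βγ}(x(t)) λ^γ(t)) ε^β(t). Then the linearized equation of motion holds: d/dt δx(t) = DV(x(t))·δx(t) + Σ_α λ^α(t) DZ_α(x(t))·δx(t) + Σ_α δλ^α(t) Z_α(x(t)) for all t. (This expresses that the transformation δ_ε x = Z_α ε^α, δ_ε λ^α = ε̇^α − (V^α_β + U^α_{βγ} λ^γ)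 ε^β is a gauge symmetry of the system ẋ = V(x) + λ^α Z_α(x).) -/
/-!
Along a solution, `d/dt δx = ε̇^α Z_α + ε^α DZ_α(V + λ^γ Z_γ)`. Its difference from the linearized
right-hand side is a combination of the brackets `ε^α [Z_α, V]` and `ε^β λ^α [Z_α, Z_β]`; expanded
through the structure functions these are exactly cancelled by the correction
`−(V^α_β + U^α_{βγ} λ^γ) ε^β` in `δλ^α`. Only first derivatives at a single point enter, so the
cancellation is an identity about linear maps.
-/

open Finset

section StructureFunctions

variable {R M ι : Type*} [CommRing R] [AddCommGroup M] [Module R M] [Fintype ι]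
  (z : ι → M) (DZ : ι → M →ₗ[R] M)

lemma sum_smul_apply_eq_of_bracket_drift (DV : M →ₗ[R] M) (v : M) (C : ι → ι → R)
    (hC : ∀ α, DV (z α) - DZ α v = ∑ β, C β α • z β) (a : ι → R) :
    ∑ α, a α • DZ α v = DV (∑ α, a α • z α) - ∑ α, (∑ β, C α β * a β) • z α := by
  have hDZ : ∀ α, DZ α v = DV (z α) - ∑ β, C β α • z β := fun α => by
    rw [← hC, sub_sub_cancel]
  simp_rw [hDZ, smul_sub, sum_sub_distrib, map_sum, map_smul, smul_sum, smul_smul, sum_smul]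
  rw [sum_comm]
  simp_rw [mul_comm]

lemma sum_sum_smul_apply_eq_of_bracket (U : ι → ι → ι → R)
    (hU : ∀ α β, DZ β (z α) - DZ α (z β) = ∑ γ, U γ α β • z γ) (a b : ι → R) :
    ∑ α, ∑ γ, (a α * b γ) • DZ α (z γ) = ∑ α, b α • DZ α (∑ β, a β • z β)
      - ∑ α, (∑ β, ∑ γ, U α β γ * b γ * a β) • z α := by
  have hDZ : ∀ α β, DZ α (z β) = DZ β (z α) + ∑ γ, U γ β α • z γ := fun α β => by
    rw [← hU, add_sub_cancel]
  have hexpand : ∑ α, b α • DZ α (∑ β, a β • z β)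
      = ∑ α, ∑ β, (b α * a β) • DZ β (z α) + ∑ α, ∑ β, ∑ γ, (b α * a β * U γ β α) • z γ := by
    rw [← sum_add_distrib]
    refine sum_congr rfl fun α _ => ?_
    rw [map_sum, smul_sum, ← sum_add_distrib]
    refine sum_congr rfl fun β _ => ?_
    rw [map_smul, hDZ]
    simp only [smul_add, smul_sum, smul_smul, mul_assoc]
  have hswap : ∑ α, ∑ β, (b α * a β) • DZ β (z α) = ∑ α, ∑ γ, (a α * b γ) • DZ α (z γ) := by
    rw [sum_comm]
    simp_rw [mul_comm]
  have hreindex : ∑ α, ∑ β, ∑ γ, (b α * a β * U γ β α) • z γ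
      = ∑ α, (∑ β, ∑ γ, U α β γ * b γ * a β) • z α := by
    rw [sum_comm_cycle]
    refine sum_congr rfl fun α _ => ?_
    rw [sum_smul, sum_comm]
    refine sum_congr rfl fun β _ => ?_
    rw [sum_smul]
    exact sum_congr rfl fun γ _ => by congr 1; ring
  rw [hexpand, hswap, hreindex, add_sub_cancel_right]

lemma sum_smul_apply_add_eq_of_brackets (DV : M →ₗ[R] M) (v : M) (C : ι → ι → R)
    (U : ι → ι → ι → R) (hC : ∀ α, DV (z α) - DZ α v = ∑ β, C β α • z β)
    (hU : ∀ α β, DZ β (z α) - DZ α (z β) = ∑ γ, U γ α β • z γ) (a b e : ι → R) :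
    ∑ α, (a α • DZ α (v + ∑ γ, b γ • z γ) + e α • z α)
      = DV (∑ α, a α • z α) + ∑ α, b α • DZ α (∑ β, a β • z β)
        + ∑ α, (e α - ∑ β, (C α β + ∑ γ, U α β γ * b γ) * a β) • z α := by
  have hlhs : ∑ α, (a α • DZ α (v + ∑ γ, b γ • z γ) + e α • z α)
      = ∑ α, a α • DZ α v + ∑ α, ∑ γ, (a α * b γ) • DZ α (z γ) + ∑ α, e α • z α := by
    simp only [map_add, map_sum, map_smul, smul_add, smul_sum, smul_smul, sum_add_distrib]
  have hrhs : ∑ α, (e α - ∑ β, (C α β + ∑ γ, U α β γ * b γ) * a β) • z α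
      = ∑ α, e α • z α - ∑ α, (∑ β, C α β * a β) • z α
        - ∑ α, (∑ β, ∑ γ, U α β γ * b γ * a β) • z α := by
    simp only [sub_smul, add_mul, sum_mul, sum_add_distrib, add_smul, sum_sub_distrib]
    abel
  rw [hlhs, hrhs, sum_smul_apply_eq_of_bracket_drift z DZ DV v C hC,
    sum_sum_smul_apply_eq_of_bracket z DZ U hU]
  abel

end StructureFunctions

lemma hasDerivAt_sum_smul_comp {𝕜 E ι : Type*} [NontriviallyNormedField 𝕜]
    [NormedAddCommGroup E] [NormedSpace 𝕜 E] [Fintype ι] {x : 𝕜 → E} {e : 𝕜 → ι → 𝕜}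
    {Z : ι → E → E} {t : 𝕜} (hx : DifferentiableAt 𝕜 x t)
    (he : ∀ α, DifferentiableAt 𝕜 (fun s => e s α) t)
    (hZ : ∀ α, DifferentiableAt 𝕜 (Z α) (x t)) :
    HasDerivAt (fun s => ∑ α, e s α • Z α (x s))
      (∑ α, (e t α • fderiv 𝕜 (Z α) (x t) (deriv x t) + deriv (fun s => e s α) t • Z α (x t))) t :=
  HasDerivAt.fun_sum fun α _ =>
    (he α).hasDerivAt.smul ((hZ α).hasFDerivAt.comp_hasDerivAt t hx.hasDerivAt)

theorem gauge_symmetry_of_involutive_system_general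
    (n l : ℕ)
    (V : (Fin n → ℝ) → (Fin n → ℝ)) (Z : Fin l → (Fin n → ℝ) → (Fin n → ℝ))
    (hZ : ∀ α, ContDiff ℝ (⊤ : ℕ∞) (Z α))
    (U : Fin l → Fin l → Fin l → (Fin n → ℝ) → ℝ)
    (Vc : Fin l → Fin l → (Fin n → ℝ) → ℝ)
    (hU : ∀ (α β : Fin l) (y : Fin n → ℝ),
      fderiv ℝ (Z β) y (Z α y) - fderiv ℝ (Z α) y (Z β y) = ∑ γ, U γ α β y • Z γ y)
    (hVc : ∀ (α : Fin l) (y : Fin n → ℝ),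
      fderiv ℝ V y (Z α y) - fderiv ℝ (Z α) y (V y) = ∑ β, Vc β α y • Z β y)
    (x : ℝ → (Fin n → ℝ)) (lam : ℝ → Fin l → ℝ) (eps : ℝ → Fin l → ℝ)
    (hx : ContDiff ℝ (⊤ : ℕ∞) x)
    (heps : ContDiff ℝ (⊤ : ℕ∞) eps)
    (heq : ∀ t, deriv x t = V (x t) + ∑ α, lam t α • Z α (x t)) :
    ∀ t, deriv (fun s => ∑ α, eps s α • Z α (x s)) t
      = fderiv ℝ V (x t) (∑ α, eps t α • Z α (x t))
        + ∑ α, lam t α • fderiv ℝ (Z α) (x t) (∑ β, eps t β • Z β (x t))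
        + ∑ α, (deriv (fun s => eps s α) t
            - ∑ β, (Vc α β (x t) + ∑ γ, U α β γ (x t) * lam t γ) * eps t β)
              • Z α (x t) := by
  intro t
  have hZd : ∀ α, DifferentiableAt ℝ (Z α) (x t) := fun α => (hZ α).differentiable (by simp) _
  have hepsd : ∀ α, DifferentiableAt ℝ (fun s => eps s α) t := fun α =>
    differentiableAt_pi.mp (heps.differentiable (by simp) t) α
  rw [(hasDerivAt_sum_smul_comp (hx.differentiable (by simp) t) hepsd hZd).deriv, heq t]
  exact sum_smul_apply_add_eq_of_brackets (fun α => Z α (x t))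
    (fun α => (fderiv ℝ (Z α) (x t) : (Fin n → ℝ) →ₗ[ℝ] (Fin n → ℝ))) (fderiv ℝ V (x t)) (V (x t))
    (fun β α => Vc β α (x t)) (fun γ α β => U γ α β (x t)) (fun α => hVc α (x t))
    (fun α β => hU α β (x t)) (eps t) (lam t) (fun α => deriv (fun s => eps s α) t)

/-- If the characteristic distribution `span{Z_α}` is involutive,
`[Z_α, Z_β] = U^γ_{αβ} Z_γ`, and preserved by the drift `V`,
`[Z_α, V] = V^β_α Z_β`, then the transformation
`δ_ε x = ε^α Z_α(x)`, `δ_ε λ^α = ε̇^α − (V^α_β + U^α_{βγ} λ^γ) ε^β`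
is a gauge symmetry of `ẋ = V(x) + λ^α Z_α(x)`: the variation `δx` satisfies
the linearized equation of motion. (Brackets: `[V,W](x) = DW(x)V(x) − DV(x)W(x)`.) -/
theorem gauge_symmetry_of_involutive_system
    (n l : ℕ)
    (V : (Fin n → ℝ) → (Fin n → ℝ)) (Z : Fin l → (Fin n → ℝ) → (Fin n → ℝ))
    (hV : ContDiff ℝ (⊤ : ℕ∞) V) (hZ : ∀ α, ContDiff ℝ (⊤ : ℕ∞) (Z α))
    (U : Fin l → Fin l → Fin l → (Fin n → ℝ) → ℝ)
    (hUsmooth : ∀ γ α β, ContDiff ℝ (⊤ : ℕ∞) (U γ α β))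
    (Vc : Fin l → Fin l → (Fin n → ℝ) → ℝ)
    (hVcsmooth : ∀ β α, ContDiff ℝ (⊤ : ℕ∞) (Vc β α))
    (hU : ∀ (α β : Fin l) (y : Fin n → ℝ),
      fderiv ℝ (Z β) y (Z α y) - fderiv ℝ (Z α) y (Z β y) = ∑ γ, U γ α β y • Z γ y)
    (hVc : ∀ (α : Fin l) (y : Fin n → ℝ),
      fderiv ℝ V y (Z α y) - fderiv ℝ (Z α) y (V y) = ∑ β, Vc β α y • Z β y)
    (x : ℝ → (Fin n → ℝ)) (lam : ℝ → Fin l → ℝ) (eps : ℝ → Fin l → ℝ)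
    (hx : ContDiff ℝ (⊤ : ℕ∞) x) (hlam : ContDiff ℝ (⊤ : ℕ∞) lam)
    (heps : ContDiff ℝ (⊤ : ℕ∞) eps)
    (heq : ∀ t, deriv x t = V (x t) + ∑ α, lam t α • Z α (x t)) :
    ∀ t, deriv (fun s => ∑ α, eps s α • Z α (x s)) t
      = fderiv ℝ V (x t) (∑ α, eps t α • Z α (x t))
        + ∑ α, lam t α • fderiv ℝ (Z α) (x t) (∑ β, eps t β • Z β (x t))
        + ∑ α, (deriv (fun s => eps s α) t
            - ∑ β, (Vc α β (x t) + ∑ γ, U α β γ (x t) * lam t γ) * eps t β)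
              • Z α (x t) :=
  gauge_symmetry_of_involutive_system_general n l V Z hZ U Vc hU hVc x lam eps hx heps heq
end

section
/- Let K be a field and M a matrix over K with rows indexed by a finite set L and columns indexed by a finite set C, and suppose rank M = s. Let A ⊆ L and B ⊆ C be subsets of cardinality s such that the s × s submatrix D = (M_{a b})_{a ∈ A, b ∈ B} is invertible. Then every entry of M is determined by its A-rows and B-columns through D: for all i ∈ L and j ∈ C, M_{i j} = Σ_{a ∈ A, b ∈ B} M_{i b} (D^{−1})_{b a} M_{a j}. In particular, the generalized Schur complement M_{i j} − Σ_{a,b} M_{i b} (D^{−1})_{b a} M_{a j} vanishes identically. -/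
/-!
The rows of `M` indexed by `A` are linearly independent, because their restriction `D` to the
columns `B` is invertible; as there are `rank M` of them, they span the row space of `M`.
Hence `M = X * M_A` for some matrix `X`, where `M_A` denotes the `A`-rows of `M`. Restricting
to the columns `B` gives `M_B = X * D`, so `X = M_B * D⁻¹` and `M = M_B * D⁻¹ * M_A`.
-/

open Submodule

namespace Matrix

variable {ι m n K : Type*} [Field K]

theorem linearIndependent_row_comp_of_isUnit_det_submatrix [Fintype ι] [DecidableEq ι]
    (M : Matrix m n K) (f : ι → m) (g : ι → n) (hD : IsUnit (M.submatrix f g).det) :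
    LinearIndependent K (M.row ∘ f) := by
  have hrows : LinearIndependent K (M.submatrix f g).row :=
    linearIndependent_rows_iff_isUnit.2 ((isUnit_iff_isUnit_det _).2 hD)
  exact .of_comp (LinearMap.funLeft K K g) hrows

theorem span_row_comp_eq_of_card_eq_rank [Fintype ι] [Fintype m] [Fintype n]
    (M : Matrix m n K) (f : ι → m) (hf : LinearIndependent K (M.row ∘ f))
    (hrank : M.rank = Fintype.card ι) :
    span K (Set.range (M.row ∘ f)) = span K (Set.range M.row) := by
  refine eq_of_le_of_finrank_le (span_mono (Set.range_comp_subset_range f M.row)) ?_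
  rw [← rank_eq_finrank_span_row, finrank_span_eq_card hf, hrank]

theorem exists_mul_submatrix_eq_of_row_mem_span [Fintype ι] (M : Matrix m n K) (f : ι → m)
    (hM : ∀ i, M.row i ∈ span K (Set.range (M.row ∘ f))) :
    ∃ X : Matrix m ι K, X * M.submatrix f id = M := by
  choose X hX using fun i => (mem_span_range_iff_exists_fun K).1 (hM i)
  refine ⟨of X, ext fun i j => ?_⟩
  simpa [mul_apply, mul_comm] using congrFun (hX i) j

theorem eq_submatrix_mul_inv_mul_submatrix [Fintype ι] [DecidableEq ι] [Fintype m] [Fintype n]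
    (M : Matrix m n K) (f : ι → m) (g : ι → n) (hrank : M.rank = Fintype.card ι)
    (hD : IsUnit (M.submatrix f g).det) :
    M = M.submatrix id g * (M.submatrix f g)⁻¹ * M.submatrix f id := by
  have hf := linearIndependent_row_comp_of_isUnit_det_submatrix M f g hD
  obtain ⟨X, hX⟩ := exists_mul_submatrix_eq_of_row_mem_span M f fun i => by
    rw [span_row_comp_eq_of_card_eq_rank M f hf hrank]
    exact subset_span ⟨i, rfl⟩
  have hcols : M.submatrix id g = X * M.submatrix f g := by
    conv_lhs => rw [← hX]
    rw [submatrix_mul _ _ _ id _ Function.bijective_id]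
    rfl
  rw [hcols, Matrix.mul_assoc X, mul_nonsing_inv _ hD, Matrix.mul_one, hX]

end Matrix

theorem rank_submatrix_schur_complement_general
    (K : Type*) [Field K]
    (L C : Type*) [Fintype L] [Fintype C]
    (M : Matrix L C K) (s : ℕ) (hrank : M.rank = s)
    (A : Finset L) (B : Finset C)
    (r : Fin s ≃ ↥A) (c : Fin s ≃ ↥B)
    (D : Matrix (Fin s) (Fin s) K) (hD : D = fun p q => M (r p).1 (c q).1)
    (hDinv : IsUnit D.det) :
    ∀ (i : L) (j : C),
      M i j = ∑ p : Fin s, ∑ q : Fin s,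
        M i (c q).1 * D⁻¹ q p * M (r p).1 j := by
  obtain rfl : D = M.submatrix (Subtype.val ∘ r) (Subtype.val ∘ c) := hD
  intro i j
  have hfactor := Matrix.eq_submatrix_mul_inv_mul_submatrix M (Subtype.val ∘ r) (Subtype.val ∘ c)
    (by rw [hrank, Fintype.card_fin]) hDinv
  conv_lhs => rw [hfactor]
  simp [Matrix.mul_apply, Finset.sum_mul]

/-- If a matrix `M` over a field has rank `s` and `D` is an invertible `s × s`
submatrix extracted from rows `A` and columns `B` (enumerated by bijections
`r : Fin s ≃ A`, `c : Fin s ≃ B`), then every entry of `M` is reconstructed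
from its `A`-rows and `B`-columns:
`M i j = ∑_{a ∈ A, b ∈ B} M i b (D⁻¹) b a M a j`, i.e. the generalized Schur
complement vanishes identically. -/
theorem rank_submatrix_schur_complement
    (K : Type*) [Field K]
    (L C : Type*) [Fintype L] [Fintype C] [DecidableEq L] [DecidableEq C]
    (M : Matrix L C K) (s : ℕ) (hrank : M.rank = s)
    (A : Finset L) (B : Finset C) (hA : A.card = s) (hB : B.card = s)
    (r : Fin s ≃ ↥A) (c : Fin s ≃ ↥B)
    (D : Matrix (Fin s) (Fin s) K) (hD : D = fun p q => M (r p).1 (c q).1)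
    (hDinv : IsUnit D.det) :
    ∀ (i : L) (j : C),
      M i j = ∑ p : Fin s, ∑ q : Fin s,
        M i (c q).1 * D⁻¹ q p * M (r p).1 j :=
  rank_submatrix_schur_complement_general K L C M s hrank A B r c D hD hDinv
end

section
/- Let T = (T_1, …, T_m) : ℝ^n → ℝ^m be a C^∞ map, and let x₀ ∈ ℝ^n satisfy T(x₀) = 0 with the Fréchet derivative DT(x₀) : ℝ^n → ℝ^m surjective. Let f : ℝ^n → ℝ be C^∞ and suppose f vanishes on the zero set {x : T(x) = 0} in some neighborhood of x₀. Then there exist an open neighborhood U of x₀ and C^∞ functions g_1, …, g_m : U → ℝ such that f(x) = Σ_{a=1}^m g_a(x) T_a(x) for all x ∈ U. (This is the triviality criterion: near a regular point of the constraint surface, every smooth function vanishing on the surface lies in the ideal generated by the constraints.) -/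
/-!
Completing `T` by a continuous projection `P` onto `ker DT(x₀)` gives a map `Φ = (T, P)` whose
derivative at `x₀` is invertible, hence a local diffeomorphism straightening the constraint
surface to `{y = 0}`. Cut off by a bump function, `f ∘ Φ⁻¹` becomes a globally smooth `F(y, z)`
vanishing at `y = 0`, and Hadamard's lemma `F(y, z) = (∫₀¹ ∂_y F(t y, z) dt) y` writes it as a
smooth linear form evaluated at `y = T`.
-/

open Set Function Metric Filter Topology
open scoped ContDiff

section ParametricIntegral

variable {E F : Type*} [NormedAddCommGroup E] [NormedSpace ℝ E] [FiniteDimensional ℝ E]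
  [NormedAddCommGroup F] [NormedSpace ℝ F] {H : ℝ → E → F} {a b : ℝ}

theorem hasFDerivAt_intervalIntegral_of_contDiff_uncurry (hH : ContDiff ℝ 1 (uncurry H))
    (x₀ : E) :
    HasFDerivAt (fun x => ∫ t in a..b, H t x) (∫ t in a..b, fderiv ℝ (H t) x₀) x₀ := by
  have hH' : Continuous fun q : ℝ × E => fderiv ℝ (H q.1) q.2 :=
    Continuous.fderiv (f := fun q : ℝ × E => H q.1)
      (hH.comp (contDiff_fst.fst.prodMk contDiff_snd)) continuous_snd le_rfl
  obtain ⟨C, hC⟩ := (isCompact_uIcc.prod (isCompact_closedBall x₀ 1)).exists_bound_of_continuousOn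
    hH'.continuousOn
  have hslice : ∀ x, Continuous fun t => H t x := fun x =>
    hH.continuous.comp (continuous_id.prodMk continuous_const)
  refine intervalIntegral.hasFDerivAt_integral_of_dominated_of_fderiv_le (bound := fun _ => C)
    (ball_mem_nhds x₀ one_pos) (.of_forall fun x => (hslice x).aestronglyMeasurable)
    ((hslice x₀).intervalIntegrable a b)
    ((hH'.comp (continuous_id.prodMk continuous_const)).aestronglyMeasurable)
    (.of_forall fun t ht x hx => hC (t, x) ⟨uIoc_subset_uIcc ht, ball_subset_closedBall hx⟩)
    intervalIntegrable_const
    (.of_forall fun t _ x _ => ?_)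
  exact ((hH.comp (contDiff_const.prodMk contDiff_id)).differentiable one_ne_zero x).hasFDerivAt

theorem contDiff_intervalIntegral_of_contDiff_uncurry (hH : ContDiff ℝ ∞ (uncurry H)) :
    ContDiff ℝ ∞ fun x => ∫ t in a..b, H t x := by
  refine contDiff_infty.mpr fun k => ?_
  induction k generalizing H with
  | zero =>
    exact contDiff_zero.mpr <| continuous_iff_continuousAt.mpr fun x =>
      (hasFDerivAt_intervalIntegral_of_contDiff_uncurry (hH.of_le (mod_cast le_top)) x).continuousAt
  | succ k ih =>
    have hderiv := hasFDerivAt_intervalIntegral_of_contDiff_uncurry (a := a) (b := b)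
      (hH.of_le (mod_cast le_top))
    rw [Nat.cast_succ, contDiff_succ_iff_fderiv_apply]
    refine ⟨fun x => (hderiv x).differentiableAt, by simp, fun v => ?_⟩
    have hH' : ContDiff ℝ ∞ fun q : ℝ × E => fderiv ℝ (H q.1) q.2 :=
      ContDiff.fderiv (f := fun q : ℝ × E => H q.1)
        (hH.comp (contDiff_fst.fst.prodMk contDiff_snd)) contDiff_snd (by simp)
    have hfderiv : ∀ x, fderiv ℝ (fun x => ∫ t in a..b, H t x) x v =
        ∫ t in a..b, fderiv ℝ (H t) x v := fun x => by
      rw [(hderiv x).fderiv, ContinuousLinearMap.intervalIntegral_apply]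
      exact (hH'.continuous.comp (continuous_id.prodMk continuous_const)).intervalIntegrable a b
    simp only [hfderiv]
    exact ih (hH'.clm_apply contDiff_const)

end ParametricIntegral

theorem exists_contDiff_eq_clm_apply_fst_of_eq_zero {Y K W : Type*}
    [NormedAddCommGroup Y] [NormedSpace ℝ Y] [FiniteDimensional ℝ Y]
    [NormedAddCommGroup K] [NormedSpace ℝ K] [FiniteDimensional ℝ K]
    [NormedAddCommGroup W] [NormedSpace ℝ W] [CompleteSpace W]
    {F : Y × K → W} (hF : ContDiff ℝ ∞ F) (hF₀ : ∀ z, F (0, z) = 0) :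
    ∃ G : Y × K → Y →L[ℝ] W, ContDiff ℝ ∞ G ∧ ∀ p, F p = G p p.1 := by
  set H : ℝ → Y × K → Y →L[ℝ] W := fun t p =>
    (fderiv ℝ F (t • p.1, p.2)).comp (ContinuousLinearMap.inl ℝ Y K)
  have hH : ContDiff ℝ ∞ (uncurry H) :=
    ((hF.fderiv_right (by simp)).comp (by fun_prop)).clm_comp contDiff_const
  refine ⟨fun p => ∫ t in (0 : ℝ)..1, H t p, contDiff_intervalIntegral_of_contDiff_uncurry hH,
    fun ⟨y, z⟩ => ?_⟩
  have hline : ∀ t, HasDerivAt (fun t : ℝ => F (t • y, z)) (H t (y, z) y) t := fun t => by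
    have := ((hasDerivAt_id t).smul_const y).prodMk (hasDerivAt_const t z)
    simp only [id, one_smul] at this
    exact (hF.differentiable (by simp) _).hasFDerivAt.comp_hasDerivAt t this
  have hcont : Continuous fun t => H t (y, z) :=
    hH.continuous.comp (continuous_id.prodMk continuous_const)
  rw [ContinuousLinearMap.intervalIntegral_apply (hcont.intervalIntegrable 0 1),
    intervalIntegral.integral_eq_sub_of_hasDerivAt (fun t _ => hline t)
      ((hcont.clm_apply continuous_const).intervalIntegrable 0 1)]
  simp [hF₀]

theorem HasStrictFDerivAt.eventually_contDiffAt_toOpenPartialHomeomorph_symm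
    {𝕜 E F : Type*} [NontriviallyNormedField 𝕜]
    [NormedAddCommGroup E] [NormedSpace 𝕜 E] [CompleteSpace E]
    [NormedAddCommGroup F] [NormedSpace 𝕜 F] {n : WithTop ℕ∞} {Φ : E → F} {A : E ≃L[𝕜] F}
    {x₀ : E} (hA : HasStrictFDerivAt Φ (A : E →L[𝕜] F) x₀) (hΦ : ContDiff 𝕜 n Φ) (hn : n ≠ 0) :
    ∀ᶠ p in 𝓝 (Φ x₀), ContDiffAt 𝕜 n (hA.toOpenPartialHomeomorph Φ).symm p := by
  set e := hA.toOpenPartialHomeomorph Φ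
  have hx₀ : x₀ ∈ e.source := hA.mem_toOpenPartialHomeomorph_source
  have hinvertible : ∀ᶠ x in 𝓝 x₀, fderiv 𝕜 Φ x ∈ range ((↑) : (E ≃L[𝕜] F) → E →L[𝕜] F) :=
    (hΦ.continuous_fderiv hn).continuousAt.preimage_mem_nhds
      (hA.hasFDerivAt.fderiv ▸ ContinuousLinearEquiv.nhds A)
  filter_upwards [e.open_target.mem_nhds (e.map_source hx₀), e.tendsto_symm hx₀ hinvertible]
    with p hp ⟨A', hA'⟩
  exact e.contDiffAt_symm hp (hA' ▸ (hΦ.differentiable hn _).hasFDerivAt) hΦ.contDiffAt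

theorem exists_contDiff_prod_ker_hasStrictFDerivAt_equiv
    {E F : Type*} [NormedAddCommGroup E] [NormedSpace ℝ E] [CompleteSpace E]
    [NormedAddCommGroup F] [NormedSpace ℝ F] [FiniteDimensional ℝ F]
    {n : WithTop ℕ∞} {T : E → F} (hT : ContDiff ℝ n T) (hn : n ≠ 0) {x₀ : E}
    (hsurj : Surjective (fderiv ℝ T x₀)) :
    ∃ (Φ : E → F × (fderiv ℝ T x₀).ker) (A : E ≃L[ℝ] F × (fderiv ℝ T x₀).ker),
      ContDiff ℝ n Φ ∧ (∀ x, (Φ x).1 = T x) ∧ HasStrictFDerivAt Φ (A : E →L[ℝ] _) x₀ := by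
  obtain ⟨P, hP⟩ := (fderiv ℝ T x₀).ker_closedComplemented_of_finiteDimensional_range
  refine ⟨fun x => (T x, P x), (fderiv ℝ T x₀).equivProdOfSurjectiveOfIsCompl P
    (LinearMap.range_eq_top.mpr hsurj) (LinearMap.range_eq_of_proj hP)
    (LinearMap.isCompl_of_proj hP), hT.prodMk P.contDiff, fun _ => rfl, ?_⟩
  exact (hT.contDiffAt.hasStrictFDerivAt hn).prodMk P.hasStrictFDerivAt

theorem exists_contDiff_eventuallyEq_support_subset {E W : Type*}
    [NormedAddCommGroup E] [NormedSpace ℝ E] [HasContDiffBump E]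
    [NormedAddCommGroup W] [NormedSpace ℝ W] {n : ℕ∞} {g : E → W} {s : Set E} {p : E}
    (hs : s ∈ 𝓝 p) (hg : ∀ q ∈ s, ContDiffAt ℝ n g q) :
    ∃ g' : E → W, ContDiff ℝ n g' ∧ g' =ᶠ[𝓝 p] g ∧ support g' ⊆ s ∩ support g := by
  obtain ⟨r, hr, hrs⟩ := Metric.mem_nhds_iff.mp hs
  let χ : ContDiffBump p := ⟨r / 4, r / 2, by positivity, by linarith⟩
  have hχs : tsupport χ ⊆ s :=
    χ.tsupport_eq ▸ (closedBall_subset_ball (half_lt_self hr)).trans hrs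
  refine ⟨(χ : E → ℝ) • g, contDiff_iff_contDiffAt.mpr fun q => ?_,
    χ.eventuallyEq_one.mono fun q hq => by simp [hq], ?_⟩
  · by_cases hq : q ∈ s
    · exact χ.contDiff.contDiffAt.smul (hg q hq)
    · have hχq : (χ : E → ℝ) =ᶠ[𝓝 q] 0 :=
        notMem_tsupport_iff_eventuallyEq.mp fun h => hq (hχs h)
      exact (contDiffAt_const (c := (0 : W))).congr_of_eventuallyEq
        (hχq.mono fun q hq => by simp [hq])
  · rw [support_smul]
    exact inter_subset_inter_left _ (subset_tsupport _ |>.trans hχs)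

theorem exists_contDiff_eventually_eq_clm_apply_of_surjective_fderiv {E F W : Type*}
    [NormedAddCommGroup E] [NormedSpace ℝ E] [FiniteDimensional ℝ E]
    [NormedAddCommGroup F] [NormedSpace ℝ F] [FiniteDimensional ℝ F]
    [NormedAddCommGroup W] [NormedSpace ℝ W] [CompleteSpace W]
    {T : E → F} {f : E → W} {x₀ : E} (hT : ContDiff ℝ ∞ T)
    (hsurj : Surjective (fderiv ℝ T x₀)) (hf : ContDiff ℝ ∞ f)
    (hvanish : ∀ᶠ x in 𝓝 x₀, T x = 0 → f x = 0) :
    ∃ L : E → F →L[ℝ] W, ContDiff ℝ ∞ L ∧ ∀ᶠ x in 𝓝 x₀, f x = L x (T x) := by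
  obtain ⟨Φ, A, hΦ, hΦT, hA⟩ :=
    exists_contDiff_prod_ker_hasStrictFDerivAt_equiv hT (by simp) hsurj
  set e := hA.toOpenPartialHomeomorph Φ
  have hx₀ : x₀ ∈ e.source := hA.mem_toOpenPartialHomeomorph_source
  have hs : ∀ᶠ p in 𝓝 (Φ x₀), ContDiffAt ℝ ∞ e.symm p ∧ Φ (e.symm p) = p ∧
      (T (e.symm p) = 0 → f (e.symm p) = 0) :=
    (hA.eventually_contDiffAt_toOpenPartialHomeomorph_symm hΦ (by simp)).and
      ((e.eventually_right_inverse' hx₀).and (e.tendsto_symm hx₀ hvanish))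
  obtain ⟨F', hF', hF'f, hF'supp⟩ := exists_contDiff_eventuallyEq_support_subset (n := ⊤)
    (g := f ∘ e.symm) hs fun p hp => hf.contDiffAt.comp p hp.1
  have hF'₀ : ∀ z, F' (0, z) = 0 := fun z => by
    by_contra h
    obtain ⟨⟨-, hright, hfT⟩, hne⟩ := hF'supp h
    exact hne (hfT (by rw [← hΦT, hright]))
  obtain ⟨G, hG, hF'G⟩ := exists_contDiff_eq_clm_apply_fst_of_eq_zero hF' hF'₀
  refine ⟨G ∘ Φ, hG.comp hΦ, ?_⟩
  filter_upwards [e.eventually_left_inverse hx₀, hΦ.continuous.continuousAt.eventually hF'f]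
    with x hleft hx
  rw [comp_apply, ← hΦT, ← hF'G, hx, comp_apply]
  exact congrArg f hleft.symm

theorem smooth_vanishing_on_regular_level_set_mem_ideal_general
    (n m : ℕ)
    (T : (Fin n → ℝ) → (Fin m → ℝ)) (hT : ContDiff ℝ (⊤ : ℕ∞) T)
    (x₀ : Fin n → ℝ)
    (hsubm : Function.Surjective (fderiv ℝ T x₀))
    (f : (Fin n → ℝ) → ℝ) (hf : ContDiff ℝ (⊤ : ℕ∞) f)
    (hvanish : ∃ U₀ ∈ nhds x₀, ∀ x ∈ U₀, T x = 0 → f x = 0) :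
    ∃ U : Set (Fin n → ℝ), IsOpen U ∧ x₀ ∈ U ∧
      ∃ g : Fin m → (Fin n → ℝ) → ℝ,
        (∀ a, ContDiffOn ℝ (⊤ : ℕ∞) (g a) U) ∧
        ∀ x ∈ U, f x = ∑ a, g a x * T x a := by
  obtain ⟨U₀, hU₀, hvanish⟩ := hvanish
  obtain ⟨L, hL, hfL⟩ := exists_contDiff_eventually_eq_clm_apply_of_surjective_fderiv hT hsubm hf
    (eventually_of_mem hU₀ hvanish)
  refine ⟨interior {x | f x = L x (T x)}, isOpen_interior, mem_interior_iff_mem_nhds.mpr hfL,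
    fun a x => L x (Pi.single a 1), fun a => (hL.clm_apply contDiff_const).contDiffOn,
    fun x hx => ?_⟩
  rw [interior_subset hx]
  conv_lhs => rw [← Finset.univ_sum_single (T x)]
  refine (map_sum (L x) _ _).trans (Finset.sum_congr rfl fun a _ => ?_)
  have hsingle : Pi.single a (T x a) = T x a • Pi.single a (1 : ℝ) := by
    rw [← Pi.single_smul', smul_eq_mul, mul_one]
  rw [hsingle, map_smul, smul_eq_mul, mul_comm]

/-- Triviality criterion: near a regular (submersion) point `x₀` of the
constraint surface `{T = 0}`, every smooth function `f` vanishing on the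
surface lies in the ideal generated by the constraints: there are a
neighborhood `U` of `x₀` and smooth functions `g_a` on `U` with
`f = ∑_a g_a T_a` on `U`. -/
theorem smooth_vanishing_on_regular_level_set_mem_ideal
    (n m : ℕ)
    (T : (Fin n → ℝ) → (Fin m → ℝ)) (hT : ContDiff ℝ (⊤ : ℕ∞) T)
    (x₀ : Fin n → ℝ) (hx₀ : T x₀ = 0)
    (hsubm : Function.Surjective (fderiv ℝ T x₀))
    (f : (Fin n → ℝ) → ℝ) (hf : ContDiff ℝ (⊤ : ℕ∞) f)
    (hvanish : ∃ U₀ ∈ nhds x₀, ∀ x ∈ U₀, T x = 0 → f x = 0) :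
    ∃ U : Set (Fin n → ℝ), IsOpen U ∧ x₀ ∈ U ∧
      ∃ g : Fin m → (Fin n → ℝ) → ℝ,
        (∀ a, ContDiffOn ℝ (⊤ : ℕ∞) (g a) U) ∧
        ∀ x ∈ U, f x = ∑ a, g a x * T x a :=
  smooth_vanishing_on_regular_level_set_mem_ideal_general n m T hT x₀ hsubm f hf hvanish
end
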